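/- arXiv:1210.6925 — 6 statements merged into one kernel-verified Lean document; each statement's English description precedes it below -/
import Mathlib

section
/- Let G be a finite simple graph on a vertex set V of even cardinality that is pfaffian. Then perfmat G ≤ ∏_{v ∈ V} d(v)^{1/4}, where d(v) denotes the degree of the vertex v in G. -/
open scoped Classical
open Matrix

/-- `M` is a perfect matching of `G`: a set of edges of `G` such that every vertex
belongs to exactly one edge of `M`. -/
def IsPerfMatching {V : Type*} [Fintype V] (G : SimpleGraph V) (M : Finset (Sym2 V)) : Prop :=
  (∀ e ∈ M, e ∈ G.edgeSet) ∧ ∀ v : V, ∃! e, e ∈ M ∧ v ∈ e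

/-- The number of perfect matchings of `G`. -/
noncomputable def perfmat {V : Type*} [Fintype V] (G : SimpleGraph V) : ℕ :=
  Nat.card {M : Finset (Sym2 V) // IsPerfMatching G M}

/-- `G` is pfaffian: there is a real skew-symmetric matrix `S` indexed by the vertices,
with `S u v ∈ {1,-1}` whenever `{u,v}` is an edge and `S u v = 0` otherwise, such that
`det S = (perfmat G)²`. -/
def IsPfaffian {V : Type*} [Fintype V] (G : SimpleGraph V) : Prop :=
  ∃ S : Matrix V V ℝ, Sᵀ = -S ∧
    (∀ u v : V, G.Adj u v → S u v = 1 ∨ S u v = -1) ∧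
    (∀ u v : V, ¬ G.Adj u v → S u v = 0) ∧
    S.det = (perfmat G : ℝ) ^ 2

/-- `G` contains no 4-cycles. -/
def No4Cycles {V : Type*} (G : SimpleGraph V) : Prop :=
  ∀ a b c d : V, a ≠ b → a ≠ c → a ≠ d → b ≠ c → b ≠ d → c ≠ d →
    ¬ (G.Adj a b ∧ G.Adj b c ∧ G.Adj c d ∧ G.Adj d a)

/-!
If `S` is the signed adjacency matrix witnessing that `G` is pfaffian, then `S Sᵀ` is positive
semidefinite, its diagonal entry at `v` is `deg v`, and its determinant is `(perfmat G)⁴`.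
Hadamard's inequality `det A ≤ ∏ A v v` for positive semidefinite `A` therefore gives
`(perfmat G)⁴ ≤ ∏ deg v`. Hadamard's inequality reduces, after rescaling `A` to unit diagonal, to
`∏ λᵢ ≤ 1` for the eigenvalues, which are nonnegative with sum `tr A = n`; this holds since
`λ ≤ exp (λ - 1)`.
-/

theorem Real.prod_le_one_of_sum_eq_card {ι : Type*} {s : Finset ι} {z : ι → ℝ}
    (hz : ∀ i ∈ s, 0 ≤ z i) (hsum : ∑ i ∈ s, z i = s.card) : ∏ i ∈ s, z i ≤ 1 :=
  calc ∏ i ∈ s, z i ≤ ∏ i ∈ s, Real.exp (z i - 1) :=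
        Finset.prod_le_prod hz fun i _ => by linarith [Real.add_one_le_exp (z i - 1)]
    _ = 1 := by
        rw [← Real.exp_sum, Finset.sum_sub_distrib, hsum]
        simp

namespace Matrix

variable {n : Type*} [Fintype n] {A : Matrix n n ℝ}

theorem PosSemidef.det_le_one_of_diag_eq_one (hA : A.PosSemidef) (hdiag : ∀ i, A i i = 1) :
    A.det ≤ 1 := by
  classical
  have htrace : ∑ i, hA.isHermitian.eigenvalues i = Fintype.card n := by
    simpa [trace, hdiag] using hA.isHermitian.trace_eq_sum_eigenvalues.symm
  rw [hA.isHermitian.det_eq_prod_eigenvalues]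
  simpa using Real.prod_le_one_of_sum_eq_card (fun i _ => hA.eigenvalues_nonneg i) htrace

theorem PosSemidef.det_eq_zero_of_diag_eq_zero (hA : A.PosSemidef) {i : n} (hi : A i i = 0) :
    A.det = 0 := by
  classical
  have hker : A *ᵥ Pi.single i 1 = 0 :=
    (hA.dotProduct_mulVec_zero_iff _).mp (by simpa [dotProduct, mulVec, Pi.single_apply] using hi)
  exact exists_mulVec_eq_zero_iff.mp ⟨Pi.single i 1, by simp, hker⟩

theorem PosSemidef.det_le_prod_diag (hA : A.PosSemidef) : A.det ≤ ∏ i, A i i := by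
  classical
  by_cases hzero : ∃ i, A i i = 0
  · obtain ⟨i, hi⟩ := hzero
    rw [hA.det_eq_zero_of_diag_eq_zero hi]
    exact Finset.prod_nonneg fun i _ => hA.diag_nonneg
  push Not at hzero
  have hpos : ∀ i, 0 < A i i := fun i => hA.diag_nonneg.lt_of_ne (hzero i).symm
  -- `D A D` with `D = diag (A i i)^(-1/2)` has unit diagonal.
  set d : n → ℝ := fun i => (Real.sqrt (A i i))⁻¹
  have hd : ∀ i, d i * A i i * d i = 1 := fun i => by
    rw [mul_right_comm, ← mul_inv, ← sq, Real.sq_sqrt (hpos i).le, inv_mul_cancel₀ (hpos i).ne']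
  have hB : (diagonal d * A * diagonal d).PosSemidef := by
    simpa using hA.mul_mul_conjTranspose_same (diagonal d)
  have hdetB := hB.det_le_one_of_diag_eq_one fun i => by
    rw [mul_diagonal, diagonal_mul, hd]
  have hprod : (∏ i, d i) ^ 2 * ∏ i, A i i = 1 := by
    rw [sq, ← Finset.prod_mul_distrib, ← Finset.prod_mul_distrib]
    exact Finset.prod_eq_one fun i _ => by rw [← hd i]; ring
  rw [det_mul, det_mul, det_diagonal] at hdetB
  nlinarith [Finset.prod_pos fun i (_ : i ∈ Finset.univ) => hpos i]

end Matrix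

namespace SimpleGraph

variable {V : Type*} [Fintype V] (G : SimpleGraph V) {S : Matrix V V ℝ}

theorem sum_sq_row_eq_degree (hadj : ∀ u v, G.Adj u v → S u v = 1 ∨ S u v = -1)
    (hnadj : ∀ u v, ¬ G.Adj u v → S u v = 0) (v : V) :
    ∑ u, S v u ^ 2 = G.degree v := by
  have hrow : ∀ u, S v u ^ 2 = if G.Adj v u then 1 else 0 := fun u => by
    by_cases h : G.Adj v u
    · rcases hadj v u h with h1 | h1 <;> simp [h1, h]
    · simp [hnadj v u h, h]
  simp only [hrow, Finset.sum_boole, ← card_neighborFinset_eq_degree]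
  congr 2
  ext u
  simp

theorem det_sq_le_prod_degree (hadj : ∀ u v, G.Adj u v → S u v = 1 ∨ S u v = -1)
    (hnadj : ∀ u v, ¬ G.Adj u v → S u v = 0) :
    S.det ^ 2 ≤ ∏ v, (G.degree v : ℝ) := by
  have hpsd : (S * Sᵀ).PosSemidef := by
    simpa using Matrix.posSemidef_self_mul_conjTranspose S
  calc S.det ^ 2 = (S * Sᵀ).det := by rw [Matrix.det_mul, Matrix.det_transpose, sq]
    _ ≤ ∏ v, (S * Sᵀ) v v := hpsd.det_le_prod_diag
    _ = ∏ v, (G.degree v : ℝ) := Finset.prod_congr rfl fun v _ => by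
        rw [← G.sum_sq_row_eq_degree hadj hnadj v, Matrix.mul_apply]
        simp [sq]

end SimpleGraph

theorem perfmat_le_prod_degree_rpow_general {V : Type*} [Fintype V] (G : SimpleGraph V)
    (hG : IsPfaffian G) :
    (perfmat G : ℝ) ≤ ∏ v : V, (G.degree v : ℝ) ^ ((1 : ℝ) / 4) := by
  obtain ⟨S, -, hadj, hnadj, hdet⟩ := hG
  have hpow : (perfmat G : ℝ) ^ (4 : ℝ) ≤ ∏ v, (G.degree v : ℝ) := by
    calc (perfmat G : ℝ) ^ (4 : ℝ) = S.det ^ 2 := by rw [hdet]; norm_cast; ring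
      _ ≤ _ := G.det_sq_le_prod_degree hadj hnadj
  rw [Real.finsetProd_rpow _ _ (fun v _ => Nat.cast_nonneg _), one_div,
    Real.le_rpow_inv_iff_of_pos (Nat.cast_nonneg _) (by positivity) (by norm_num)]
  exact hpow

/-- For a pfaffian graph `G` on an even number of vertices,
`perfmat G ≤ ∏_v d(v)^{1/4}`. -/
theorem perfmat_le_prod_degree_rpow {V : Type*} [Fintype V] (G : SimpleGraph V)
    (hV : Even (Fintype.card V)) (hG : IsPfaffian G) :
    (perfmat G : ℝ) ≤ ∏ v : V, (G.degree v : ℝ) ^ ((1 : ℝ) / 4) :=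
  perfmat_le_prod_degree_rpow_general G hG
end

section
/- For every integer r ≥ 3, the complete bipartite graph K_{r,r} is not pfaffian; that is, for every real skew-symmetric matrix S indexed by the vertices of K_{r,r} with S(u,v) ∈ {1,-1} whenever {u,v} is an edge of K_{r,r} and S(u,v) = 0 otherwise, one has det S < (r!)². -/
open scoped Classical
open Matrix

/-!
Writing `B` for the block of `S` between the two sides, skew-symmetry gives `det S = (det B)²`.
Every term `sign σ • ∏ i, B (σ i) i` of the Leibniz expansion of the `±1` matrix `B` is `±1`, so
`|det B| ≤ r!`, with equality only if all terms are equal. They are not: for three fixed indices,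
the six terms of the permutations of those indices multiply to `-x²` (each entry of the `3 × 3`
minor occurs in exactly two of them, and three of the six permutations are odd), which cannot be
the sixth power of a nonzero real.
-/

open Equiv Finset

theorem abs_sum_lt_card_of_ne {α R : Type*} [Fintype α] [Ring R] [LinearOrder R]
    [IsStrictOrderedRing R] {f : α → R} (hf : ∀ x, |f x| ≤ 1) {x y : α} (hxy : f x ≠ f y) :
    |∑ z, f z| < Fintype.card α := by
  have hle : ∀ z, -1 ≤ f z ∧ f z ≤ 1 := fun z => abs_le.mp (hf z)
  obtain ⟨z, hz⟩ : ∃ z, f z < 1 := by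
    by_contra! h
    exact hxy (((hle x).2.antisymm (h x)).trans ((hle y).2.antisymm (h y)).symm)
  obtain ⟨w, hw⟩ : ∃ w, -1 < f w := by
    by_contra! h
    exact hxy (((h x).antisymm (hle x).1).trans ((h y).antisymm (hle y).1).symm)
  refine abs_lt.mpr ⟨?_, ?_⟩
  · calc -(Fintype.card α : R) = ∑ _z : α, (-1 : R) := by simp
      _ < ∑ z, f z := sum_lt_sum (fun z _ => (hle z).1) ⟨w, mem_univ w, hw⟩
  · calc ∑ z, f z < ∑ _z : α, (1 : R) := sum_lt_sum (fun z _ => (hle z).2) ⟨z, mem_univ z, hz⟩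
      _ = Fintype.card α := by simp

namespace Matrix

variable {n R : Type*} [Fintype n] [DecidableEq n]

def leibnizTerm [CommRing R] (M : Matrix n n R) (σ : Perm n) : R :=
  Perm.sign σ • ∏ i, M (σ i) i

theorem det_eq_sum_leibnizTerm [CommRing R] (M : Matrix n n R) :
    M.det = ∑ σ, leibnizTerm M σ :=
  det_apply M

theorem abs_leibnizTerm [CommRing R] [LinearOrder R] [IsStrictOrderedRing R]
    (M : Matrix n n R) (σ : Perm n) : |leibnizTerm M σ| = ∏ i, |M (σ i) i| := by
  rcases Int.units_eq_one_or (Perm.sign σ) with h | h <;>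
    simp [leibnizTerm, h, abs_prod]

theorem leibnizTerm_eq_of_support_subset [CommRing R] (M : Matrix n n R) {σ : Perm n}
    {s : Finset n} (hσ : σ.support ⊆ s) :
    leibnizTerm M σ = Perm.sign σ • ((∏ i ∈ s, M (σ i) i) * ∏ i ∈ sᶜ, M i i) := by
  rw [leibnizTerm, ← prod_mul_prod_compl s]
  congr 2
  refine prod_congr rfl fun i hi => ?_
  rw [Perm.notMem_support.mp fun h => mem_compl.mp hi (hσ h)]

theorem exists_prod_leibnizTerm_perm_three_eq_neg_sq [CommRing R] (M : Matrix n n R)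
    {a b c : n} (hab : a ≠ b) (hac : a ≠ c) (hbc : b ≠ c) :
    ∃ x : R, leibnizTerm M 1 * leibnizTerm M (Equiv.swap a b) *
      leibnizTerm M (Equiv.swap a c) * leibnizTerm M (Equiv.swap b c) *
      leibnizTerm M (Equiv.swap a b * Equiv.swap b c) *
      leibnizTerm M (Equiv.swap b c * Equiv.swap a b) = -x ^ 2 := by
  set s : Finset n := {a, b, c}
  have ha : a ∈ s := by simp [s]
  have hb : b ∈ s := by simp [s]
  have hc : c ∈ s := by simp [s]
  have hswap : ∀ {x y}, x ≠ y → x ∈ s → y ∈ s → (Equiv.swap x y).support ⊆ s :=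
    fun hxy hx hy => by
      rw [Perm.support_swap hxy]
      exact insert_subset hx (singleton_subset_iff.mpr hy)
  have hmul : ∀ {σ τ : Perm n}, σ.support ⊆ s → τ.support ⊆ s → (σ * τ).support ⊆ s :=
    fun hσ hτ => (Perm.support_mul_le _ _).trans (union_subset hσ hτ)
  have hprod : ∀ σ : Perm n, ∏ i ∈ s, M (σ i) i = M (σ a) a * M (σ b) b * M (σ c) c := by
    intro σ
    rw [prod_insert (by simp [hab, hac]), prod_insert (by simp [hbc]), prod_singleton, mul_assoc]
  rw [leibnizTerm_eq_of_support_subset M (s := s) (by simp),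
    leibnizTerm_eq_of_support_subset M (hswap hab ha hb),
    leibnizTerm_eq_of_support_subset M (hswap hac ha hc),
    leibnizTerm_eq_of_support_subset M (hswap hbc hb hc),
    leibnizTerm_eq_of_support_subset M (hmul (hswap hab ha hb) (hswap hbc hb hc)),
    leibnizTerm_eq_of_support_subset M (hmul (hswap hbc hb hc) (hswap hab ha hb))]
  simp only [hprod]
  simp only [Perm.mul_apply, Perm.one_apply, swap_apply_left, swap_apply_right,
    swap_apply_of_ne_of_ne, map_mul, Perm.sign_one, Perm.sign_swap, hab, hac, hbc, hab.symm,
    hac.symm, hbc.symm, ne_eq, not_false_eq_true]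
  exact ⟨M a a * M a b * M a c * M b a * M b b * M b c * M c a * M c b * M c c *
    (∏ i ∈ sᶜ, M i i) ^ 3, by simp only [Units.smul_def]; push_cast; ring⟩

theorem leibnizTerm_eq_zero_of_forall_eq [CommRing R] [LinearOrder R] [IsStrictOrderedRing R]
    (M : Matrix n n R) (hn : 3 ≤ Fintype.card n) {t : R} (ht : ∀ σ, leibnizTerm M σ = t) :
    t = 0 := by
  obtain ⟨a, b, c, hab, hac, hbc⟩ := Fintype.two_lt_card_iff.mp hn
  obtain ⟨x, hx⟩ := exists_prod_leibnizTerm_perm_three_eq_neg_sq M hab hac hbc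
  simp only [ht] at hx
  have ht6 : t ^ 6 = 0 :=
    le_antisymm (by nlinarith [sq_nonneg x]) (Even.pow_nonneg (by decide) t)
  exact pow_eq_zero_iff (by norm_num) |>.mp ht6

theorem abs_det_lt_factorial [CommRing R] [LinearOrder R] [IsStrictOrderedRing R]
    (M : Matrix n n R) (hn : 3 ≤ Fintype.card n) (hM : ∀ i j, |M i j| = 1) :
    |M.det| < (Fintype.card n).factorial := by
  have hterm : ∀ σ, |leibnizTerm M σ| = 1 := fun σ => by simp [abs_leibnizTerm, hM]
  obtain ⟨σ, hσ⟩ : ∃ σ, leibnizTerm M σ ≠ leibnizTerm M 1 := by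
    by_contra! h
    simpa [leibnizTerm_eq_zero_of_forall_eq M hn h] using hterm 1
  rw [det_eq_sum_leibnizTerm, ← Fintype.card_perm]
  exact_mod_cast abs_sum_lt_card_of_ne (fun σ => (hterm σ).le) hσ

theorem det_fromBlocks_zero_neg_transpose [CommRing R] (B : Matrix n n R) :
    (fromBlocks 0 B (-Bᵀ) 0).det = B.det ^ 2 := by
  have hJ : (fromBlocks 0 1 (-1) 0 : Matrix (n ⊕ n) (n ⊕ n) R) =
      fromBlocks 1 0 (-1) 1 * fromBlocks 1 1 0 1 * fromBlocks 1 0 (-1) 1 := by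
    simp [fromBlocks_multiply]
  have hfac : fromBlocks 0 B (-Bᵀ) 0 = fromBlocks B 0 0 Bᵀ * fromBlocks 0 1 (-1) 0 := by
    simp [fromBlocks_multiply]
  simp [hfac, hJ, det_fromBlocks_zero₂₁, sq]

theorem det_eq_sq_det_toBlocks₁₂ [CommRing R] {S : Matrix (n ⊕ n) (n ⊕ n) R} (hskew : Sᵀ = -S)
    (h₁₁ : S.toBlocks₁₁ = 0) (h₂₂ : S.toBlocks₂₂ = 0) : S.det = S.toBlocks₁₂.det ^ 2 := by
  have h₂₁ : S.toBlocks₂₁ = -S.toBlocks₁₂ᵀ := by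
    ext i j
    simpa [toBlocks₂₁, toBlocks₁₂] using congrFun (congrFun hskew (Sum.inl j)) (Sum.inr i)
  conv_lhs => rw [← fromBlocks_toBlocks S, h₁₁, h₂₂, h₂₁]
  exact det_fromBlocks_zero_neg_transpose _

end Matrix

/-- For `r ≥ 3` the complete bipartite graph `K_{r,r}` is not pfaffian:
for every real skew-symmetric matrix `S` indexed by its vertices with entries `±1` on
edges and `0` elsewhere, `det S < (r!)²`. -/
theorem completeBipartite_not_pfaffian (r : ℕ) (hr : 3 ≤ r)
    (S : Matrix (Fin r ⊕ Fin r) (Fin r ⊕ Fin r) ℝ) (hskew : Sᵀ = -S)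
    (hedge : ∀ u v, (completeBipartiteGraph (Fin r) (Fin r)).Adj u v →
      S u v = 1 ∨ S u v = -1)
    (hnonedge : ∀ u v, ¬ (completeBipartiteGraph (Fin r) (Fin r)).Adj u v → S u v = 0) :
    S.det < ((r.factorial : ℝ)) ^ 2 := by
  have hdet : S.det = S.toBlocks₁₂.det ^ 2 :=
    det_eq_sq_det_toBlocks₁₂ hskew (by ext i j; exact hnonedge _ _ (by simp))
      (by ext i j; exact hnonedge _ _ (by simp))
  have hB : ∀ i j, |S.toBlocks₁₂ i j| = 1 := fun i j =>
    (abs_eq zero_le_one).mpr (hedge _ _ (by simp))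
  have hlt : |S.toBlocks₁₂.det| < r.factorial := by
    simpa using abs_det_lt_factorial S.toBlocks₁₂ (by simpa using hr) hB
  rw [hdet, ← sq_abs]
  exact pow_lt_pow_left₀ hlt (abs_nonneg _) two_ne_zero
end

section
/- Let G be a finite simple pfaffian graph on n vertices (n even, n ≥ 4) with m edges. Then perfmat G ≤ (2m/n)^{n/4}. Moreover, if g ≥ 3 is an integer such that m ≤ (g/(g-2))·(n-2), then perfmat G < e^{-1/2}·(2g/(g-2))^{n/4}; in particular, if g ≥ 4 then perfmat G < 2^{n/2}. -/
/-! If `S` is the signed adjacency matrix witnessing that `G` is pfaffian, then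
`(perfmat G)⁴ = det (Sᵀ S)`. The matrix `Sᵀ S` is positive semidefinite with trace
`∑ S u v ² = 2m`, so AM-GM on its eigenvalues gives `det (Sᵀ S) ≤ (2m/n)ⁿ`.
Under the edge bound, `2m/n ≤ (2g/(g-2)) (1 - 2/n)` and `(1 - 2/n)^(n/4) < e^(-1/2)`;
for `g ≥ 4` moreover `2g/(g-2) ≤ 4`. -/

open scoped Classical
open Matrix

theorem Matrix.PosSemidef.det_le_trace_div_card_pow {ι : Type*} [Fintype ι] [DecidableEq ι]
    {A : Matrix ι ι ℝ} (hA : A.PosSemidef) :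
    A.det ≤ (A.trace / Fintype.card ι) ^ Fintype.card ι := by
  rcases (Fintype.card ι).eq_zero_or_pos with hι | hι
  · have : IsEmpty ι := Fintype.card_eq_zero_iff.mp hι
    simp
  set μ := hA.isHermitian.eigenvalues
  have hμ : ∀ i, 0 ≤ μ i := hA.eigenvalues_nonneg
  have hn : (Fintype.card ι : ℝ) ≠ 0 := by exact_mod_cast hι.ne'
  have amgm := Real.geom_mean_le_arith_mean_weighted Finset.univ (fun _ => (Fintype.card ι : ℝ)⁻¹)
    μ (fun _ _ => by positivity) (by simp [hn]) (fun i _ => hμ i)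
  rw [Real.finsetProd_rpow _ _ (fun i _ => hμ i), ← Finset.mul_sum] at amgm
  calc A.det = ((∏ i, μ i) ^ (Fintype.card ι : ℝ)⁻¹) ^ Fintype.card ι := by
        rw [← Real.rpow_mul_natCast (Finset.prod_nonneg fun i _ => hμ i), inv_mul_cancel₀ hn,
          Real.rpow_one, hA.isHermitian.det_eq_prod_eigenvalues]
        simp [μ]
    _ ≤ ((Fintype.card ι : ℝ)⁻¹ * ∑ i, μ i) ^ Fintype.card ι := by
        gcongr
        exact Real.rpow_nonneg (Finset.prod_nonneg fun i _ => hμ i) _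
    _ = (A.trace / Fintype.card ι) ^ Fintype.card ι := by
        rw [hA.isHermitian.trace_eq_sum_eigenvalues]
        simp [μ, div_eq_inv_mul]

theorem Matrix.sq_det_le_trace_transpose_mul_self_div_card_pow {ι : Type*} [Fintype ι]
    [DecidableEq ι] (S : Matrix ι ι ℝ) :
    S.det ^ 2 ≤ ((Sᵀ * S).trace / Fintype.card ι) ^ Fintype.card ι := by
  have hpsd : (Sᵀ * S).PosSemidef := by
    simpa using Matrix.posSemidef_conjTranspose_mul_self S
  simpa [Matrix.det_mul, sq] using hpsd.det_le_trace_div_card_pow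

theorem SimpleGraph.trace_transpose_mul_self_eq_two_mul_card_edgeFinset {V : Type*} [Fintype V]
    [DecidableEq V] (G : SimpleGraph V) [DecidableRel G.Adj] (S : Matrix V V ℝ)
    (h_adj : ∀ u v, G.Adj u v → S u v = 1 ∨ S u v = -1)
    (h_nonadj : ∀ u v, ¬ G.Adj u v → S u v = 0) :
    (Sᵀ * S).trace = 2 * G.edgeFinset.card := by
  have hsq : ∀ u v, S u v * S u v = if G.Adj u v then 1 else 0 := by
    intro u v
    by_cases h : G.Adj u v
    · rcases h_adj u v h with h' | h' <;> simp [h, h']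
    · simp [h, h_nonadj u v h]
  have hcol : ∀ v, ∑ u, S u v * S u v = G.degree v := by
    intro v
    simp_rw [hsq, Finset.sum_boole, ← G.card_neighborFinset_eq_degree,
      G.neighborFinset_eq_filter, G.adj_comm]
  simp only [Matrix.trace, Matrix.diag, Matrix.mul_apply, Matrix.transpose_apply, hcol]
  exact_mod_cast G.sum_degrees_eq_twice_card_edges

theorem IsPfaffian.perfmat_pow_four_le {V : Type*} [Fintype V] {G : SimpleGraph V}
    (hG : IsPfaffian G) :
    (perfmat G : ℝ) ^ 4 ≤ (2 * G.edgeFinset.card / Fintype.card V) ^ Fintype.card V := by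
  obtain ⟨S, -, h_adj, h_nonadj, hdet⟩ := hG
  calc (perfmat G : ℝ) ^ 4 = S.det ^ 2 := by rw [hdet]; ring
    _ ≤ ((Sᵀ * S).trace / Fintype.card V) ^ Fintype.card V :=
        S.sq_det_le_trace_transpose_mul_self_div_card_pow
    _ = _ := by rw [G.trace_transpose_mul_self_eq_two_mul_card_edgeFinset S h_adj h_nonadj]

theorem Real.le_rpow_div_of_pow_le {x y : ℝ} {k n : ℕ} (hk : k ≠ 0) (hx : 0 ≤ x) (hy : 0 ≤ y)
    (h : x ^ k ≤ y ^ n) : x ≤ y ^ ((n : ℝ) / k) := by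
  rwa [← pow_le_pow_iff_left₀ hx (by positivity) hk, ← Real.rpow_mul_natCast hy,
    div_mul_cancel₀ _ (Nat.cast_ne_zero.mpr hk), Real.rpow_natCast]

theorem IsPfaffian.perfmat_le {V : Type*} [Fintype V] {G : SimpleGraph V} (hG : IsPfaffian G) :
    (perfmat G : ℝ) ≤ (2 * G.edgeFinset.card / Fintype.card V) ^ ((Fintype.card V : ℝ) / 4) :=
  Real.le_rpow_div_of_pow_le (k := 4) (y := 2 * G.edgeFinset.card / Fintype.card V) four_ne_zero
    (Nat.cast_nonneg _) (by positivity) hG.perfmat_pow_four_le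

theorem Real.one_sub_rpow_lt_exp_neg_mul {t b : ℝ} (ht0 : t ≠ 0) (ht1 : t ≤ 1) (hb : 0 < b) :
    (1 - t) ^ b < Real.exp (-(t * b)) := by
  rw [neg_mul_eq_neg_mul, Real.exp_mul]
  gcongr
  linarith [Real.add_one_lt_exp (neg_ne_zero.mpr ht0)]

theorem IsPfaffian.perfmat_lt_exp_mul_rpow {V : Type*} [Fintype V] {G : SimpleGraph V}
    (hG : IsPfaffian G) (hn : 2 ≤ Fintype.card V) {g : ℝ} (hg : 2 < g)
    (hm : (G.edgeFinset.card : ℝ) ≤ g / (g - 2) * (Fintype.card V - 2)) :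
    (perfmat G : ℝ) < Real.exp (-1 / 2) * (2 * g / (g - 2)) ^ ((Fintype.card V : ℝ) / 4) := by
  replace hn : (2 : ℝ) ≤ Fintype.card V := by exact_mod_cast hn
  set n : ℝ := (Fintype.card V : ℝ)
  have hg : 0 < g - 2 := by linarith
  have hdensity : 2 * G.edgeFinset.card / n ≤ 2 * g / (g - 2) * (1 - 2 / n) := by
    calc 2 * G.edgeFinset.card / n ≤ 2 * (g / (g - 2) * (n - 2)) / n := by gcongr
      _ = 2 * g / (g - 2) * (1 - 2 / n) := by field_simp
  calc (perfmat G : ℝ) ≤ (2 * G.edgeFinset.card / n) ^ (n / 4) := hG.perfmat_le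
    _ ≤ (2 * g / (g - 2) * (1 - 2 / n)) ^ (n / 4) := by gcongr
    _ = (2 * g / (g - 2)) ^ (n / 4) * (1 - 2 / n) ^ (n / 4) :=
        Real.mul_rpow (by positivity) (by rw [sub_nonneg, div_le_one₀] <;> linarith)
    _ < (2 * g / (g - 2)) ^ (n / 4) * Real.exp (-(2 / n * (n / 4))) := by
        gcongr
        exact Real.one_sub_rpow_lt_exp_neg_mul (by positivity)
          (by rw [div_le_one₀] <;> linarith) (by positivity)
    _ = Real.exp (-1 / 2) * (2 * g / (g - 2)) ^ (n / 4) := by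
        rw [mul_comm]
        congr 2
        field_simp
        ring

theorem perfmat_planar_girth_bound_general {V : Type*} [Fintype V] (G : SimpleGraph V)
    (hn4 : 4 ≤ Fintype.card V) (hG : IsPfaffian G) :
    (perfmat G : ℝ) ≤
        (2 * (G.edgeFinset.card : ℝ) / (Fintype.card V : ℝ)) ^ ((Fintype.card V : ℝ) / 4) ∧
      ∀ g : ℕ, 3 ≤ g →
        (G.edgeFinset.card : ℝ) ≤ ((g : ℝ) / ((g : ℝ) - 2)) * ((Fintype.card V : ℝ) - 2) →
        (perfmat G : ℝ) <
            Real.exp (-(1 : ℝ) / 2) *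
              (2 * (g : ℝ) / ((g : ℝ) - 2)) ^ ((Fintype.card V : ℝ) / 4) ∧
          (4 ≤ g → (perfmat G : ℝ) < 2 ^ ((Fintype.card V : ℝ) / 2)) := by
  refine ⟨hG.perfmat_le, fun g hg3 hm => ?_⟩
  have hg3 : (3 : ℝ) ≤ g := by exact_mod_cast hg3
  have hlt := hG.perfmat_lt_exp_mul_rpow (by omega) (by linarith) hm
  refine ⟨hlt, fun hg4 => hlt.trans_le ?_⟩
  have hg4 : (4 : ℝ) ≤ g := by exact_mod_cast hg4
  have hc0 : 0 ≤ 2 * (g : ℝ) / (g - 2) := div_nonneg (by linarith) (by linarith)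
  have hc4 : 2 * (g : ℝ) / (g - 2) ≤ 4 := by
    rw [div_le_iff₀ (by linarith)]
    linarith
  have he : Real.exp (-1 / 2) ≤ 1 := Real.exp_le_one_iff.mpr (by norm_num)
  calc Real.exp (-1 / 2) * (2 * g / (g - 2)) ^ ((Fintype.card V : ℝ) / 4)
      ≤ 1 * 4 ^ ((Fintype.card V : ℝ) / 4) := by gcongr
    _ = 2 ^ ((Fintype.card V : ℝ) / 2) := by
        rw [one_mul, show (4 : ℝ) = 2 ^ (2 : ℝ) by norm_num, ← Real.rpow_mul zero_le_two]
        ring_nf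

/-- Let `G` be a pfaffian graph on `n` vertices (`n` even, `n ≥ 4`)
with `m` edges.  Then `perfmat G ≤ (2m/n)^{n/4}`.  Moreover, if `g ≥ 3` is an integer
with `m ≤ (g/(g-2))(n-2)`, then `perfmat G < e^{-1/2} (2g/(g-2))^{n/4}`; in particular
if `g ≥ 4` then `perfmat G < 2^{n/2}`. -/
theorem perfmat_planar_girth_bound {V : Type*} [Fintype V] (G : SimpleGraph V)
    (hn4 : 4 ≤ Fintype.card V) (hV : Even (Fintype.card V)) (hG : IsPfaffian G) :
    (perfmat G : ℝ) ≤
        (2 * (G.edgeFinset.card : ℝ) / (Fintype.card V : ℝ)) ^ ((Fintype.card V : ℝ) / 4) ∧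
      ∀ g : ℕ, 3 ≤ g →
        (G.edgeFinset.card : ℝ) ≤ ((g : ℝ) / ((g : ℝ) - 2)) * ((Fintype.card V : ℝ) - 2) →
        (perfmat G : ℝ) <
            Real.exp (-(1 : ℝ) / 2) *
              (2 * (g : ℝ) / ((g : ℝ) - 2)) ^ ((Fintype.card V : ℝ) / 4) ∧
          (4 ≤ g → (perfmat G : ℝ) < 2 ^ ((Fintype.card V : ℝ) / 2)) :=
  perfmat_planar_girth_bound_general G hn4 hG
end

section
/- Let G = (V,E) be a finite simple pfaffian graph on an even number of vertices that contains no 4-cycles. Let M' be a collection of pairwise disjoint unordered pairs {u,v} of distinct vertices of G such that for each pair {u,v} ∈ M' there exists a vertex w of G with {u,w} and {w,v} both edges of G (i.e., u and v are joined by a path of length 2 in G). Then perfmat G ≤ (∏_{{u,v} ∈ M'} (d(u)d(v) - 1))^{1/4} · (∏_{v ∈ V not covered by M'} d(v))^{1/4}, where d(v) is the degree of v in G. -/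
open scoped Classical
open Matrix

/-!
Write `P = S Sᵀ` for a pfaffian signing `S` of `G`. Then `P` is positive semidefinite with
`det P = (perfmat G)⁴`, its diagonal entries are the degrees, and `P u v` is a signed count of
the common neighbours of `u` and `v`. Without 4-cycles, two vertices joined by a path of length 2
have exactly one common neighbour, so `P u v = ±1` and the principal `2 × 2` minor of `P` on
`{u, v}` is `d(u) d(v) - 1`. Fischer's inequality for the partition of the vertices into the
pairs of `M'` and the uncovered singletons bounds `det P` by the product of these minors.
-/

namespace Matrix

variable {n : Type*} [Fintype n] [DecidableEq n]

lemma PosSemidef.one_le_det_one_add {M : Matrix n n ℝ} (hM : M.PosSemidef) :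
    1 ≤ (1 + M).det := by
  have hchar := congrArg (Polynomial.eval (-1)) hM.1.charpoly_eq
  rw [eval_charpoly, Polynomial.eval_prod] at hchar
  have hdet : (1 + M).det = ∏ i, (1 + hM.1.eigenvalues i) := by
    rw [show 1 + M = -(scalar n (-1 : ℝ) - M) by simp [sub_eq_add_neg, add_comm], det_neg, hchar,
      ← Finset.card_univ, ← Finset.prod_neg]
    simp [add_comm]
  rw [hdet]
  exact Finset.one_le_prod fun i _ => le_add_of_nonneg_right (hM.eigenvalues_nonneg i)

open scoped MatrixOrder in
lemma PosSemidef.det_le_det_add {S F : Matrix n n ℝ} (hS : S.PosSemidef) (hF : F.PosSemidef) :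
    S.det ≤ (S + F).det := by
  rcases eq_or_ne S.det 0 with hS0 | hS0
  · rw [hS0]
    exact (hS.add hF).det_nonneg
  set Q := CFC.sqrt S
  have hQQ : Q * Q = S := CFC.sqrt_mul_sqrt_self S hS.nonneg
  have hQ : IsUnit Q.det := by
    refine Ne.isUnit fun h => hS0 ?_
    rw [← hQQ, det_mul, h, zero_mul]
  have hQH : Qᴴ = Q := (CFC.sqrt_nonneg S).posSemidef.1
  have hM : (Q⁻¹ * F * Q⁻¹).PosSemidef := by
    have := hF.conjTranspose_mul_mul_same Q⁻¹
    rwa [conjTranspose_nonsing_inv, hQH] at this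
  have hSF : S + F = Q * (1 + Q⁻¹ * F * Q⁻¹) * Q := by
    rw [mul_add, add_mul, mul_one, hQQ, ← mul_assoc, ← mul_assoc, mul_nonsing_inv _ hQ, one_mul,
      mul_assoc, nonsing_inv_mul _ hQ, mul_one]
  calc S.det = Q.det * Q.det * 1 := by rw [← hQQ, det_mul, mul_one]
    _ ≤ Q.det * Q.det * (1 + Q⁻¹ * F * Q⁻¹).det :=
      mul_le_mul_of_nonneg_left hM.one_le_det_one_add (mul_self_nonneg _)
    _ = (S + F).det := by rw [hSF, det_mul, det_mul]; ring

lemma PosSemidef.det_le_det_toBlocks₁₁_mul_det_toBlocks₂₂ {m l : Type*} [Fintype m]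
    [DecidableEq m] [Fintype l] [DecidableEq l] {P : Matrix (m ⊕ l) (m ⊕ l) ℝ}
    (hP : P.PosSemidef) : P.det ≤ P.toBlocks₁₁.det * P.toBlocks₂₂.det := by
  rcases eq_or_ne P.det 0 with hP0 | hP0
  · rw [hP0]
    exact mul_nonneg (hP.submatrix _).det_nonneg (hP.submatrix _).det_nonneg
  set A := P.toBlocks₁₁
  set B := P.toBlocks₁₂
  set D := P.toBlocks₂₂
  have hA : A.PosDef := (hP.posDef_iff_det_ne_zero.mpr hP0).submatrix Sum.inl_injective
  have : Invertible A := hA.isUnit.invertible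
  have hPblocks : P = fromBlocks A B Bᴴ D := by
    have hC : P.toBlocks₂₁ = Bᴴ := funext₂ fun i j => (congrFun₂ hP.1 (.inr i) (.inl j)).symm
    rw [← hC, fromBlocks_toBlocks]
  have hSchur : (D - Bᴴ * A⁻¹ * B).PosSemidef :=
    (PosDef.fromBlocks₁₁ B D hA).mp (hPblocks ▸ hP)
  have hSchur_le : (D - Bᴴ * A⁻¹ * B).det ≤ D.det := by
    simpa using hSchur.det_le_det_add (hA.posSemidef.inv.conjTranspose_mul_mul_same B)
  calc P.det = A.det * (D - Bᴴ * A⁻¹ * B).det := by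
        rw [hPblocks, det_fromBlocks₁₁, invOf_eq_nonsing_inv]
    _ ≤ A.det * D.det := mul_le_mul_of_nonneg_left hSchur_le hA.posSemidef.det_nonneg

variable {V : Type*} [DecidableEq V]

def principalMinor {R : Type*} [CommRing R] (P : Matrix V V R) (s : Finset V) : R :=
  (P.submatrix ((↑) : s → V) (↑)).det

lemma principalMinor_univ [Fintype V] {R : Type*} [CommRing R] (P : Matrix V V R) :
    P.principalMinor Finset.univ = P.det :=
  det_submatrix_equiv_self (Equiv.subtypeUnivEquiv Finset.mem_univ) P

lemma principalMinor_singleton {R : Type*} [CommRing R] (P : Matrix V V R) (v : V) :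
    P.principalMinor {v} = P v v :=
  det_unique _

lemma principalMinor_pair {R : Type*} [CommRing R] (P : Matrix V V R) {u v : V} (huv : u ≠ v) :
    P.principalMinor {u, v} = P u u * P v v - P u v * P v u := by
  let e : Fin 2 → ({u, v} : Finset V) := ![⟨u, by simp⟩, ⟨v, by simp⟩]
  have he : Function.Bijective e := by
    rw [Fintype.bijective_iff_injective_and_card]
    refine ⟨?_, by simp only [Fintype.card_coe, Finset.card_pair huv, Fintype.card_fin]⟩
    intro i j hij
    fin_cases i <;> fin_cases j <;> simp_all [e, huv.symm]
  rw [principalMinor, ← det_submatrix_equiv_self (Equiv.ofBijective e he), det_fin_two]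
  simp [e]

lemma PosSemidef.principalMinor_nonneg {P : Matrix V V ℝ} (hP : P.PosSemidef) (s : Finset V) :
    0 ≤ P.principalMinor s :=
  (hP.submatrix _).det_nonneg

lemma PosSemidef.principalMinor_union_le {P : Matrix V V ℝ} (hP : P.PosSemidef) {s t : Finset V}
    (hst : Disjoint s t) : P.principalMinor (s ∪ t) ≤ P.principalMinor s * P.principalMinor t := by
  have h := (hP.submatrix (Subtype.val ∘ Equiv.Finset.union s t hst))
    |>.det_le_det_toBlocks₁₁_mul_det_toBlocks₂₂
  rwa [← submatrix_submatrix, det_submatrix_equiv_self] at h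

lemma PosSemidef.principalMinor_biUnion_le {ι : Type*} {P : Matrix V V ℝ} (hP : P.PosSemidef)
    (I : Finset ι) {B : ι → Finset V} (hB : (I : Set ι).PairwiseDisjoint B) :
    P.principalMinor (I.biUnion B) ≤ ∏ i ∈ I, P.principalMinor (B i) := by
  induction I using Finset.induction_on with
  | empty =>
    rw [Finset.biUnion_empty, Finset.prod_empty]
    exact det_isEmpty.le
  | insert i I hi ih =>
    rw [Finset.coe_insert] at hB
    rw [Finset.biUnion_insert, Finset.prod_insert hi]
    calc P.principalMinor (B i ∪ I.biUnion B)
        ≤ P.principalMinor (B i) * P.principalMinor (I.biUnion B) :=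
          hP.principalMinor_union_le ((Finset.disjoint_biUnion_right _ _ _).mpr fun j hj =>
            hB (Set.mem_insert _ _) (Set.mem_insert_of_mem _ hj) (ne_of_mem_of_not_mem hj hi).symm)
      _ ≤ _ := mul_le_mul_of_nonneg_left (ih (hB.subset (Set.subset_insert _ _)))
          (hP.principalMinor_nonneg _)

lemma PosSemidef.det_le_prod_principalMinor_pair_mul_prod_diag [Fintype V] {P : Matrix V V ℝ}
    (hP : P.PosSemidef) (M : Finset (V × V))
    (hM : (M : Set (V × V)).PairwiseDisjoint fun p => ({p.1, p.2} : Finset V)) :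
    P.det ≤ (∏ p ∈ M, P.principalMinor {p.1, p.2}) *
      ∏ v ∈ Finset.univ.filter (fun v => ∀ p ∈ M, v ≠ p.1 ∧ v ≠ p.2), P v v := by
  set covered := M.biUnion fun p => ({p.1, p.2} : Finset V)
  set uncovered := Finset.univ.filter (fun v => ∀ p ∈ M, v ≠ p.1 ∧ v ≠ p.2)
  have hcompl : uncovered = coveredᶜ := by
    ext v
    simp [covered, uncovered, forall_and]
  have hdiag : (uncovered : Set V).PairwiseDisjoint (singleton : V → Finset V) := by
    intro u _ v _ huv
    simpa using huv
  calc P.det = P.principalMinor (covered ∪ uncovered) := by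
        rw [hcompl, Finset.union_compl, principalMinor_univ]
    _ ≤ P.principalMinor covered * P.principalMinor (uncovered.biUnion singleton) := by
      rw [Finset.biUnion_singleton_eq_self, hcompl]
      exact hP.principalMinor_union_le disjoint_compl_right
    _ ≤ (∏ p ∈ M, P.principalMinor {p.1, p.2}) * ∏ v ∈ uncovered, P.principalMinor {v} :=
      mul_le_mul (hP.principalMinor_biUnion_le M hM) (hP.principalMinor_biUnion_le _ hdiag)
        (hP.principalMinor_nonneg _) (Finset.prod_nonneg fun _ _ => hP.principalMinor_nonneg _)
    _ = _ := by simp only [principalMinor_singleton]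

end Matrix

namespace SimpleGraph

variable {V : Type*} {G : SimpleGraph V}

lemma _root_.No4Cycles.subsingleton_commonNeighbors (h4 : No4Cycles G) {u v : V} (huv : u ≠ v) :
    (G.commonNeighbors u v).Subsingleton := by
  intro a ha b hb
  rw [mem_commonNeighbors] at ha hb
  by_contra hab
  exact h4 u a v b ha.1.ne huv hb.1.ne ha.2.ne.symm hab hb.2.ne ⟨ha.1, ha.2.symm, hb.2, hb.1.symm⟩

variable [DecidableRel G.Adj] {S : Matrix V V ℝ}
  (hS : ∀ u v, G.Adj u v → S u v = 1 ∨ S u v = -1) (hS0 : ∀ u v, ¬ G.Adj u v → S u v = 0)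
include hS hS0

lemma mul_self_signing_apply (u v : V) : S u v * S u v = if G.Adj u v then 1 else 0 := by
  split_ifs with h
  · rcases hS u v h with h1 | h1 <;> simp [h1]
  · simp [hS0 u v h]

lemma mul_transpose_signing_apply_self [Fintype V] (v : V) : (S * Sᵀ) v v = G.degree v := by
  simp [Matrix.mul_apply, mul_self_signing_apply hS hS0, Finset.sum_boole,
    ← neighborFinset_eq_filter]

lemma sq_mul_transpose_signing_apply [Fintype V] (h4 : No4Cycles G) {u v w : V} (huv : u ≠ v)
    (huw : G.Adj u w) (hwv : G.Adj w v) : (S * Sᵀ) u v ^ 2 = 1 := by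
  have hw : w ∈ G.commonNeighbors u v := G.mem_commonNeighbors.mpr ⟨huw, hwv.symm⟩
  have hsum : (S * Sᵀ) u v = S u w * S v w := by
    rw [Matrix.mul_apply]
    refine Finset.sum_eq_single w (fun x _ hxw => ?_) (by simp)
    by_contra hx
    have hxc : x ∈ G.commonNeighbors u v := by
      rw [mem_commonNeighbors]
      exact ⟨by_contra fun h => hx (by simp [hS0 u x h]),
        by_contra fun h => hx (by simp [hS0 v x h])⟩
    exact hxw (h4.subsingleton_commonNeighbors huv hxc hw)
  rw [hsum, mul_pow, sq, sq, mul_self_signing_apply hS hS0, mul_self_signing_apply hS hS0,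
    if_pos huw, if_pos hwv.symm, one_mul]

lemma principalMinor_pair_mul_transpose_signing [Fintype V] [DecidableEq V] (h4 : No4Cycles G)
    {u v w : V} (huv : u ≠ v) (huw : G.Adj u w) (hwv : G.Adj w v) :
    (S * Sᵀ).principalMinor {u, v} = G.degree u * G.degree v - 1 := by
  rw [principalMinor_pair _ huv, mul_transpose_signing_apply_self hS hS0,
    mul_transpose_signing_apply_self hS hS0, (isSymm_mul_transpose_self S).apply u v, ← sq,
    sq_mul_transpose_signing_apply hS hS0 h4 huv huw hwv]

end SimpleGraph

theorem perfmat_le_of_match_in_square_general {V : Type*} [Fintype V] (G : SimpleGraph V)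
    [DecidableRel G.Adj] (hG : IsPfaffian G)
    (h4 : No4Cycles G) (M' : Finset (V × V))
    (hne : ∀ p ∈ M', p.1 ≠ p.2)
    (hdisj : ∀ p ∈ M', ∀ q ∈ M', p ≠ q → ({p.1, p.2} : Set V) ∩ {q.1, q.2} = ∅)
    (hpath : ∀ p ∈ M', ∃ w : V, G.Adj p.1 w ∧ G.Adj w p.2) :
    (perfmat G : ℝ) ≤
      (∏ p ∈ M', ((G.degree p.1 : ℝ) * (G.degree p.2 : ℝ) - 1)) ^ ((1 : ℝ) / 4) *
        (∏ v ∈ Finset.univ.filter (fun v : V => ∀ p ∈ M', v ≠ p.1 ∧ v ≠ p.2),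
          (G.degree v : ℝ)) ^ ((1 : ℝ) / 4) := by
  obtain ⟨S, -, hS, hS0, hdet⟩ := hG
  set P := S * Sᵀ
  have hP : P.PosSemidef := by
    simpa [conjTranspose_eq_transpose_of_trivial] using posSemidef_self_mul_conjTranspose S
  have hdetP : P.det = (perfmat G : ℝ) ^ 4 := by
    rw [det_mul, det_transpose, hdet]
    ring
  have hpair : ∀ p ∈ M', P.principalMinor {p.1, p.2} = (G.degree p.1 : ℝ) * G.degree p.2 - 1 :=
    fun p hp =>
      have ⟨_, h1w, hw2⟩ := hpath p hp
      SimpleGraph.principalMinor_pair_mul_transpose_signing hS hS0 h4 (hne p hp) h1w hw2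
  have hpairwise : (M' : Set (V × V)).PairwiseDisjoint fun p => ({p.1, p.2} : Finset V) := by
    intro p hp q hq hpq
    rw [Function.onFun, ← Finset.disjoint_coe, Finset.coe_pair, Finset.coe_pair,
      Set.disjoint_iff_inter_eq_empty]
    exact hdisj p hp q hq hpq
  have key := hP.det_le_prod_principalMinor_pair_mul_prod_diag M' hpairwise
  rw [hdetP, Finset.prod_congr rfl hpair] at key
  simp only [P, SimpleGraph.mul_transpose_signing_apply_self hS hS0] at key
  have hpairs_nonneg : 0 ≤ ∏ p ∈ M', ((G.degree p.1 : ℝ) * G.degree p.2 - 1) :=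
    Finset.prod_nonneg fun p hp => hpair p hp ▸ hP.principalMinor_nonneg _
  rw [one_div, ← Real.mul_rpow hpairs_nonneg (by positivity),
    Real.le_rpow_inv_iff_of_pos (by positivity) (by positivity) (by norm_num)]
  exact_mod_cast key

/-- Let `G` be a pfaffian graph on an even number of vertices with no
4-cycles, and let `M'` be a collection of pairwise disjoint pairs of distinct vertices,
each pair joined by a path of length 2 in `G`.  Then
`perfmat G ≤ (∏_{{u,v}∈M'} (d(u)d(v)-1))^{1/4} (∏_{v uncovered} d(v))^{1/4}`. -/
theorem perfmat_le_of_match_in_square {V : Type*} [Fintype V] (G : SimpleGraph V)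
    [DecidableRel G.Adj] (hV : Even (Fintype.card V)) (hG : IsPfaffian G)
    (h4 : No4Cycles G) (M' : Finset (V × V))
    (hne : ∀ p ∈ M', p.1 ≠ p.2)
    (hdisj : ∀ p ∈ M', ∀ q ∈ M', p ≠ q → ({p.1, p.2} : Set V) ∩ {q.1, q.2} = ∅)
    (hpath : ∀ p ∈ M', ∃ w : V, G.Adj p.1 w ∧ G.Adj w p.2) :
    (perfmat G : ℝ) ≤
      (∏ p ∈ M', ((G.degree p.1 : ℝ) * (G.degree p.2 : ℝ) - 1)) ^ ((1 : ℝ) / 4) *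
        (∏ v ∈ Finset.univ.filter (fun v : V => ∀ p ∈ M', v ≠ p.1 ∧ v ≠ p.2),
          (G.degree v : ℝ)) ^ ((1 : ℝ) / 4) :=
  perfmat_le_of_match_in_square_general G hG h4 M' hne hdisj hpath
end

section
/- Let n ≥ 3 and set φ = (1+√5)/2 and ψ = (1-√5)/2. If n is odd, then det(I_n - T_{n,+}²) = det(I_n - T_{n,-}²) = (φⁿ + ψⁿ)². If n is even, then det(I_n - T_{n,+}²) = (φⁿ + ψⁿ + 2)² and det(I_n - T_{n,-}²) = (φⁿ + ψⁿ - 2)². -/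
/-!
Write `T_{n,±} = C - Cᵀ`, where `C` is the cyclic shift whose wrap-around entry is `δ = ∓1`.
`C` is orthogonal and its characteristic polynomial is `Xⁿ - δ`. Since `T` is skew-symmetric,
`I + T = (I - T)ᵀ`, so `det (I - T²) = det (I - T)²`; and `(I - T) C = I + C - C² = -(φ - C)(ψ - C)`
because `φ + ψ = 1` and `φψ = -1`. Hence `det (I - T²) = ((φⁿ - δ)(ψⁿ - δ))²`, which expands
to the stated formulas via `(φψ)ⁿ = (-1)ⁿ`.
-/

open Matrix

/-- The `n × n` real skew-symmetric matrix whose `(i, i+1)` entry is `1` and `(i+1, i)`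
entry is `-1` for `1 ≤ i ≤ n-1` (here indexed from `0`), whose `(1, n)` entry is `ε` and
`(n, 1)` entry is `-ε`, and all of whose other entries are `0`.  `T_{n,+}` and `T_{n,-}`
are obtained for `ε = 1` and `ε = -1` respectively. -/
def Tpm (n : ℕ) (ε : ℝ) : Matrix (Fin n) (Fin n) ℝ :=
  Matrix.of fun i j =>
    if (i : ℕ) + 1 = (j : ℕ) then 1
    else if (j : ℕ) + 1 = (i : ℕ) then -1
    else if (i : ℕ) = 0 ∧ (j : ℕ) = n - 1 then ε
    else if (j : ℕ) = 0 ∧ (i : ℕ) = n - 1 then -ε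
    else 0

/-- The matrix `T_{n,+}`. -/
def Tplus (n : ℕ) : Matrix (Fin n) (Fin n) ℝ := Tpm n 1

/-- The matrix `T_{n,-}`. -/
def Tminus (n : ℕ) : Matrix (Fin n) (Fin n) ℝ := Tpm n (-1)

section Skew

variable {ι R : Type*} [Fintype ι] [DecidableEq ι] [CommRing R]

theorem Matrix.det_one_sub_sq_of_transpose_eq_neg {T : Matrix ι ι R} (hT : Tᵀ = -T) :
    det (1 - T ^ 2) = det (1 - T) ^ 2 := by
  have h : (1 - T)ᵀ = 1 + T := by rw [transpose_sub, transpose_one, hT, sub_neg_eq_add]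
  calc det (1 - T ^ 2) = det ((1 - T) * (1 - T)ᵀ) := by rw [h]; noncomm_ring
    _ = det (1 - T) ^ 2 := by rw [det_mul, det_transpose, sq]

theorem Matrix.one_sub_sub_transpose_mul_self {C : Matrix ι ι R} (hC : C * Cᵀ = 1) {a b : R}
    (hab : a + b = 1) (hab' : a * b = -1) :
    (1 - (C - Cᵀ)) * C = -((a • 1 - C) * (b • 1 - C)) := by
  have hC' : Cᵀ * C = 1 := mul_eq_one_comm.mp hC
  calc (1 - (C - Cᵀ)) * C = 1 + C - C * C := by
        rw [sub_mul, sub_mul, hC', one_mul]; abel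
    _ = -((a * b) • 1 - (a + b) • C + C * C) := by rw [hab, hab']; module
    _ = _ := by
        simp only [sub_mul, mul_sub, smul_mul_assoc, mul_smul_comm, one_mul, mul_one]
        module

theorem Matrix.det_one_sub_sub_transpose_sq {C : Matrix ι ι R} (hC : C * Cᵀ = 1) {a b : R}
    (hab : a + b = 1) (hab' : a * b = -1) :
    det (1 - (C - Cᵀ) ^ 2) = (det (a • 1 - C) * det (b • 1 - C)) ^ 2 := by
  have hskew : (C - Cᵀ)ᵀ = -(C - Cᵀ) := by rw [transpose_sub, transpose_transpose, neg_sub]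
  have hdetC : det C ^ 2 = 1 := by
    calc det C ^ 2 = det (C * Cᵀ) := by rw [det_mul, det_transpose, sq]
      _ = 1 := by rw [hC, det_one]
  have hsign : ((-1 : R) ^ Fintype.card ι) ^ 2 = 1 := by
    rw [← pow_mul, mul_comm, pow_mul, neg_one_sq, one_pow]
  calc det (1 - (C - Cᵀ) ^ 2) = (det (1 - (C - Cᵀ)) * det C) ^ 2 := by
        rw [det_one_sub_sq_of_transpose_eq_neg hskew, mul_pow, hdetC, mul_one]
    _ = ((-1) ^ Fintype.card ι * (det (a • 1 - C) * det (b • 1 - C))) ^ 2 := by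
        rw [← det_mul, one_sub_sub_transpose_mul_self hC hab hab', det_neg, det_mul]
    _ = (det (a • 1 - C) * det (b • 1 - C)) ^ 2 := by rw [mul_pow, hsign, one_mul]

end Skew

section SignedShift

variable {R : Type*} [CommRing R]

def signedShift (n : ℕ) (δ : R) : Matrix (Fin n) (Fin n) R :=
  of fun i j => if j = finRotate n i then (if (i : ℕ) + 1 = n then δ else 1) else 0

theorem signedShift_apply {n : ℕ} (δ : R) (i j : Fin n) :
    signedShift n δ i j =
      if (j : ℕ) = i + 1 then 1 else if (i : ℕ) + 1 = n ∧ (j : ℕ) = 0 then δ else 0 := by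
  obtain ⟨m, rfl⟩ : ∃ m, n = m + 1 := ⟨n - 1, by have := i.isLt; omega⟩
  have hi := i.isLt
  simp only [signedShift, of_apply, Fin.ext_iff, coe_finRotate, Fin.val_last]
  split_ifs <;> first | rfl | omega

theorem signedShift_mul_transpose {n : ℕ} {δ : R} (hδ : δ * δ = 1) :
    signedShift n δ * (signedShift n δ)ᵀ = 1 := by
  ext i j
  simp only [signedShift, mul_apply, transpose_apply, of_apply, ite_mul, zero_mul,
    Finset.sum_ite_eq', Finset.mem_univ, if_true, (finRotate n).injective.eq_iff, one_apply]
  split_ifs <;> simp_all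

theorem smul_one_sub_signedShift_apply (m : ℕ) (x δ : R) (i j : Fin (m + 1)) :
    (x • 1 - signedShift (m + 1) δ) i j = (if (i : ℕ) = j then x else 0) -
      (if (j : ℕ) = i + 1 then 1 else if (i : ℕ) = m ∧ (j : ℕ) = 0 then δ else 0) := by
  simp only [Matrix.sub_apply, Matrix.smul_apply, one_apply, signedShift_apply, Fin.ext_iff,
    smul_eq_mul, mul_ite, mul_one, mul_zero, Nat.add_right_cancel_iff]

theorem det_smul_one_sub_signedShift_submatrix_succ_succ (m : ℕ) (x δ : R) :
    det ((x • 1 - signedShift (m + 1) δ).submatrix Fin.succ Fin.succ) = x ^ m := by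
  rw [det_of_isUpperTriangular, Finset.prod_eq_pow_card (fun i _ => ?_), Finset.card_fin]
  · simp only [submatrix_apply, smul_one_sub_signedShift_apply, Fin.val_succ,
      Nat.add_one_ne_zero, and_false, if_false]
    split_ifs <;> first | ring1 | omega
  · intro i j (hji : (j : ℕ) < i)
    simp only [submatrix_apply, smul_one_sub_signedShift_apply, Fin.val_succ,
      Nat.add_one_ne_zero, and_false, if_false]
    split_ifs <;> first | ring1 | omega

theorem det_smul_one_sub_signedShift_submatrix_castSucc_succ (m : ℕ) (x δ : R) :
    det ((x • 1 - signedShift (m + 1) δ).submatrix Fin.castSucc Fin.succ) = (-1) ^ m := by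
  rw [det_of_isLowerTriangular, Finset.prod_eq_pow_card (fun i _ => ?_), Finset.card_fin]
  · have := i.isLt
    simp only [submatrix_apply, smul_one_sub_signedShift_apply, Fin.val_succ,
      Nat.add_one_ne_zero, and_false, if_false, Fin.val_castSucc]
    split_ifs <;> first | ring1 | omega
  · intro i j (hij : (i : ℕ) < j)
    have := j.isLt
    simp only [submatrix_apply, smul_one_sub_signedShift_apply, Fin.val_succ,
      Nat.add_one_ne_zero, and_false, if_false, Fin.val_castSucc]
    split_ifs <;> first | ring1 | omega

theorem det_smul_one_sub_signedShift {n : ℕ} (hn : 2 ≤ n) (x δ : R) :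
    det (x • 1 - signedShift n δ) = x ^ n - δ := by
  -- expand along the first column, whose only nonzero entries are `x` (row `0`) and `-δ` (row `m`)
  obtain ⟨m, rfl⟩ : ∃ m, n = m + 1 := ⟨n - 1, by omega⟩
  have hm : m ≠ 0 := by omega
  have hlast : (0 : Fin (m + 1)) ≠ Fin.last m := Fin.ext_iff.not.mpr (by simpa using hm.symm)
  have hsign : (-1 : R) ^ m * (-1) ^ m = 1 := by rw [← mul_pow, neg_one_mul, neg_neg, one_pow]
  have h_zero : (x • 1 - signedShift (m + 1) δ) 0 0 = x := by
    rw [smul_one_sub_signedShift_apply]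
    simp [hm.symm]
  have h_last : (x • 1 - signedShift (m + 1) δ) (Fin.last m) 0 = -δ := by
    rw [smul_one_sub_signedShift_apply]
    simp [hm]
  rw [det_succ_column_zero, Fintype.sum_eq_add 0 (Fin.last m) hlast]
  · rw [Fin.succAbove_zero, Fin.succAbove_last,
      det_smul_one_sub_signedShift_submatrix_succ_succ,
      det_smul_one_sub_signedShift_submatrix_castSucc_succ, h_zero, h_last, Fin.val_zero,
      Fin.val_last, pow_zero, one_mul]
    linear_combination (-δ) * hsign
  · rintro i ⟨hi₀, hi_last⟩
    have hi₀' : (i : ℕ) ≠ 0 := Fin.val_ne_of_ne hi₀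
    have hi_last' : (i : ℕ) ≠ m := Fin.val_ne_of_ne hi_last
    rw [smul_one_sub_signedShift_apply]
    simp [hi₀', hi_last']

end SignedShift

theorem Tpm_eq_signedShift_sub_transpose {n : ℕ} (hn : 3 ≤ n) (ε : ℝ) :
    Tpm n ε = signedShift n (-ε) - (signedShift n (-ε))ᵀ := by
  ext i j
  have := i.isLt
  have := j.isLt
  simp only [Tpm, of_apply, Matrix.sub_apply, transpose_apply, signedShift_apply]
  split_ifs <;> first | ring1 | omega

theorem det_one_sub_Tpm_sq {n : ℕ} (hn : 3 ≤ n) {ε : ℝ} (hε : ε * ε = 1) {a b : ℝ}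
    (hab : a + b = 1) (hab' : a * b = -1) :
    det (1 - Tpm n ε ^ 2) = ((a ^ n + ε) * (b ^ n + ε)) ^ 2 := by
  have hC := signedShift_mul_transpose (n := n) (show -ε * -ε = 1 by rwa [neg_mul_neg])
  rw [Tpm_eq_signedShift_sub_transpose hn, det_one_sub_sub_transpose_sq hC hab hab',
    det_smul_one_sub_signedShift (by omega), det_smul_one_sub_signedShift (by omega),
    sub_neg_eq_add, sub_neg_eq_add]

/-- Let `n ≥ 3`, `φ = (1+√5)/2` and `ψ = (1-√5)/2`.  If `n` is odd
then `det(I - T_{n,+}²) = det(I - T_{n,-}²) = (φⁿ + ψⁿ)²`; if `n` is even then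
`det(I - T_{n,+}²) = (φⁿ + ψⁿ + 2)²` and `det(I - T_{n,-}²) = (φⁿ + ψⁿ - 2)²`. -/
theorem det_one_sub_T_sq (n : ℕ) (hn : 3 ≤ n) :
    (Odd n →
      ((1 : Matrix (Fin n) (Fin n) ℝ) - Tplus n ^ 2).det =
          (((1 + Real.sqrt 5) / 2) ^ n + ((1 - Real.sqrt 5) / 2) ^ n) ^ 2 ∧
        ((1 : Matrix (Fin n) (Fin n) ℝ) - Tminus n ^ 2).det =
          (((1 + Real.sqrt 5) / 2) ^ n + ((1 - Real.sqrt 5) / 2) ^ n) ^ 2) ∧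
    (Even n →
      ((1 : Matrix (Fin n) (Fin n) ℝ) - Tplus n ^ 2).det =
          (((1 + Real.sqrt 5) / 2) ^ n + ((1 - Real.sqrt 5) / 2) ^ n + 2) ^ 2 ∧
        ((1 : Matrix (Fin n) (Fin n) ℝ) - Tminus n ^ 2).det =
          (((1 + Real.sqrt 5) / 2) ^ n + ((1 - Real.sqrt 5) / 2) ^ n - 2) ^ 2) := by
  set φ := (1 + Real.sqrt 5) / 2
  set ψ := (1 - Real.sqrt 5) / 2
  have hplus : det (1 - Tplus n ^ 2) = ((φ ^ n + 1) * (ψ ^ n + 1)) ^ 2 :=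
    det_one_sub_Tpm_sq hn (by norm_num) Real.goldenRatio_add_goldenConj
      Real.goldenRatio_mul_goldenConj
  have hminus : det (1 - Tminus n ^ 2) = ((φ ^ n + -1) * (ψ ^ n + -1)) ^ 2 :=
    det_one_sub_Tpm_sq hn (by norm_num) Real.goldenRatio_add_goldenConj
      Real.goldenRatio_mul_goldenConj
  have hφψ : φ ^ n * ψ ^ n = (-1) ^ n := by rw [← mul_pow, Real.goldenRatio_mul_goldenConj]
  rw [hplus, hminus]
  refine ⟨fun hodd => ?_, fun heven => ?_⟩
  · rw [hodd.neg_one_pow] at hφψ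
    constructor
    · linear_combination (φ ^ n * ψ ^ n + 1 + 2 * φ ^ n + 2 * ψ ^ n) * hφψ
    · linear_combination (φ ^ n * ψ ^ n + 1 - 2 * φ ^ n - 2 * ψ ^ n) * hφψ
  · rw [heven.neg_one_pow] at hφψ
    constructor
    · linear_combination (φ ^ n * ψ ^ n + 2 * φ ^ n + 2 * ψ ^ n + 3) * hφψ
    · linear_combination (φ ^ n * ψ ^ n - 2 * φ ^ n - 2 * ψ ^ n + 3) * hφψ
end

section
/- For n ≥ 3 let φ(j, C_n) denote the number of matchings of the cycle graph C_n consisting of exactly j edges (with φ(0, C_n) = 1), and let M(t) = ∑_{j=0}^{⌊n/2⌋} φ(j, C_n)·t^{2j}. Then for every real t: if n is odd, det(I_n + t·T_{n,+}) = det(I_n + t·T_{n,-}) = M(t); if n is even, det(I_n + t·T_{n,+}) = M(t) + 2tⁿ and det(I_n + t·T_{n,-}) = M(t) - 2tⁿ. -/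
open Matrix

/-- The cycle graph `C_n` on vertices `1, …, n` (indexed here from `0`), with edges
`{i, i+1}` for `1 ≤ i ≤ n-1` together with `{1, n}`. -/
def cycGraph (n : ℕ) : SimpleGraph (Fin n) where
  Adj i j := i ≠ j ∧ ((i : ℕ) + 1 = (j : ℕ) ∨ (j : ℕ) + 1 = (i : ℕ) ∨
    ((i : ℕ) = 0 ∧ (j : ℕ) = n - 1) ∨ ((j : ℕ) = 0 ∧ (i : ℕ) = n - 1))
  symm := ⟨by intro i j h; exact ⟨h.1.symm, by tauto⟩⟩
  loopless := ⟨by intro i h; exact h.1 rfl⟩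

/-- `M` is a matching of the cycle graph `C_n`: a set of pairwise disjoint edges. -/
def IsCycleMatching (n : ℕ) (M : Finset (Sym2 (Fin n))) : Prop :=
  (∀ e ∈ M, e ∈ (cycGraph n).edgeSet) ∧
    ∀ e ∈ M, ∀ f ∈ M, e ≠ f → ∀ v : Fin n, ¬ (v ∈ e ∧ v ∈ f)

/-- `φ(j, C_n)`: the number of matchings of the cycle graph `C_n` consisting of exactly
`j` edges. -/
noncomputable def numCycleMatchings (n j : ℕ) : ℕ :=
  Nat.card {M : Finset (Sym2 (Fin n)) // IsCycleMatching n M ∧ M.card = j}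

/-!
Expand `det (1 + t T)` by the Leibniz formula. `T` is supported on the edges of `C_n`, so a
permutation contributes only if it sends every vertex to itself or to a neighbour. For `n ≥ 3`
such a permutation is either one of the two rotations `i ↦ i ± 1` or an involution, and these
involutions correspond to the matchings of `C_n` (pair each moved vertex with its image).
Since `T` is skew-symmetric with entries `±1` on the edges, a matching `M` contributes
`(-1)^|M| (-t²)^|M| = t^(2|M|)`, while the rotations contribute `ε tⁿ` and `(-1)ⁿ ε tⁿ`,
where `ε = ±1` is the corner entry.
-/

open Finset

namespace Fin

variable {n : ℕ} [NeZero n]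

theorem val_add_one_eq_ite (i : Fin n) :
    ((i + 1 : Fin n) : ℕ) = if (i : ℕ) = n - 1 then (0 : ℕ) else (i : ℕ) + 1 := by
  obtain ⟨m, rfl⟩ : ∃ m, n = m + 1 := Nat.exists_eq_add_one.mpr (NeZero.pos n)
  simp [Fin.val_add_one, Fin.ext_iff]

theorem add_one_ne_self (hn : 2 ≤ n) (i : Fin n) : i + 1 ≠ i := by
  rw [Ne, Fin.ext_iff, val_add_one_eq_ite]
  split_ifs <;> omega

theorem add_one_add_one_ne_self (hn : 3 ≤ n) (i : Fin n) : i + 1 + 1 ≠ i := by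
  rw [Ne, Fin.ext_iff, val_add_one_eq_ite, val_add_one_eq_ite]
  split_ifs <;> omega

open Fin.NatCast in
theorem forall_of_add_one_closed {P : Fin n → Prop} {i : Fin n} (hi : P i)
    (h : ∀ j, P j → P (j + 1)) (j : Fin n) : P j := by
  have key : ∀ k : ℕ, P (i + (k : Fin n)) := by
    intro k
    induction k with
    | zero => simpa using hi
    | succ k ih => simpa [Nat.cast_succ, add_assoc] using h _ ih
  simpa using key (j - i).val

end Fin

namespace SimpleGraph

variable {V : Type*} (G : SimpleGraph V)

-- `IsCycleMatching n` is `(cycGraph n).IsMatchingFinset` by definition.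
def IsMatchingFinset (M : Finset (Sym2 V)) : Prop :=
  (∀ e ∈ M, e ∈ G.edgeSet) ∧ ∀ e ∈ M, ∀ f ∈ M, e ≠ f → ∀ v : V, ¬ (v ∈ e ∧ v ∈ f)

def IsAdjPerm (σ : Equiv.Perm V) : Prop :=
  ∀ i, σ i = i ∨ G.Adj i (σ i)

variable {G}

theorem IsAdjPerm.inv {σ : Equiv.Perm V} (hσ : G.IsAdjPerm σ) : G.IsAdjPerm σ⁻¹ := by
  intro i
  have hi : σ (σ⁻¹ i) = i := σ.apply_symm_apply i
  rcases hσ (σ⁻¹ i) with h | h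
  · exact Or.inl (hi ▸ h).symm
  · exact Or.inr (hi ▸ h).symm

namespace IsMatchingFinset

variable {M : Finset (Sym2 V)}

theorem ne_of_mk_mem (hM : G.IsMatchingFinset M) {i j : V} (h : s(i, j) ∈ M) : i ≠ j :=
  G.ne_of_adj (hM.1 _ h)

theorem eq_of_mk_mem (hM : G.IsMatchingFinset M) {i j j' : V} (h : s(i, j) ∈ M)
    (h' : s(i, j') ∈ M) : j = j' := by
  by_contra hne
  exact hM.2 _ h _ h' (fun he => hne (Sym2.congr_right.mp he)) i
    ⟨Sym2.mem_mk_left i j, Sym2.mem_mk_left i j'⟩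

variable [DecidableEq V]

theorem pairwiseDisjoint_toFinset (hM : G.IsMatchingFinset M) :
    (M : Set (Sym2 V)).PairwiseDisjoint Sym2.toFinset := fun e he f hf hef =>
  Finset.disjoint_left.mpr fun v hve hvf =>
    hM.2 e he f hf hef v ⟨Sym2.mem_toFinset.mp hve, Sym2.mem_toFinset.mp hvf⟩

theorem card_biUnion_toFinset (hM : G.IsMatchingFinset M) :
    #(M.biUnion Sym2.toFinset) = 2 * #M := by
  rw [card_biUnion hM.pairwiseDisjoint_toFinset, mul_comm, ← smul_eq_mul, ← sum_const]
  exact sum_congr rfl fun e he =>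
    Sym2.card_toFinset_of_not_isDiag e (G.not_isDiag_of_mem_edgeSet (hM.1 e he))

theorem two_mul_card_le [Fintype V] (hM : G.IsMatchingFinset M) :
    2 * #M ≤ Fintype.card V :=
  hM.card_biUnion_toFinset ▸ card_le_univ _

end IsMatchingFinset

end SimpleGraph

open SimpleGraph

section Matchings

variable {V : Type*} {G : SimpleGraph V} {M : Finset (Sym2 V)}

open Classical in
noncomputable def matchingPartner (M : Finset (Sym2 V)) (i : V) : V :=
  if h : ∃ j, s(i, j) ∈ M then h.choose else i

theorem mk_matchingPartner_mem {i : V} (h : ∃ j, s(i, j) ∈ M) :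
    s(i, matchingPartner M i) ∈ M := by
  rw [matchingPartner, dif_pos h]
  exact h.choose_spec

theorem matchingPartner_eq_self {i : V} (h : ¬∃ j, s(i, j) ∈ M) : matchingPartner M i = i := by
  rw [matchingPartner, dif_neg h]

namespace SimpleGraph.IsMatchingFinset

theorem matchingPartner_eq (hM : G.IsMatchingFinset M) {i j : V} (h : s(i, j) ∈ M) :
    matchingPartner M i = j :=
  hM.eq_of_mk_mem (mk_matchingPartner_mem ⟨j, h⟩) h

theorem matchingPartner_involutive (hM : G.IsMatchingFinset M) :
    Function.Involutive (matchingPartner M) := by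
  intro i
  by_cases h : ∃ j, s(i, j) ∈ M
  · obtain ⟨j, hj⟩ := h
    rw [hM.matchingPartner_eq hj, hM.matchingPartner_eq (Sym2.eq_swap ▸ hj)]
  · rw [matchingPartner_eq_self h, matchingPartner_eq_self h]

theorem matchingPartner_ne_self_iff [DecidableEq V] (hM : G.IsMatchingFinset M) {i : V} :
    matchingPartner M i ≠ i ↔ i ∈ M.biUnion Sym2.toFinset := by
  simp only [mem_biUnion, Sym2.mem_toFinset]
  constructor
  · intro h
    by_cases hi : ∃ j, s(i, j) ∈ M
    · exact ⟨_, mk_matchingPartner_mem hi, Sym2.mem_mk_left _ _⟩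
    · exact absurd (matchingPartner_eq_self hi) h
  · rintro ⟨e, he, hie⟩
    rw [← Sym2.other_spec hie] at he
    rw [hM.matchingPartner_eq he]
    exact (hM.ne_of_mk_mem he).symm

noncomputable def perm (hM : G.IsMatchingFinset M) : Equiv.Perm V :=
  hM.matchingPartner_involutive.toPerm _

theorem perm_apply (hM : G.IsMatchingFinset M) (i : V) : hM.perm i = matchingPartner M i :=
  rfl

theorem isAdjPerm_perm (hM : G.IsMatchingFinset M) : G.IsAdjPerm hM.perm := by
  intro i
  by_cases h : ∃ j, s(i, j) ∈ M
  · exact Or.inr (hM.1 _ (mk_matchingPartner_mem h))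
  · exact Or.inl (matchingPartner_eq_self h)

variable [Fintype V] [DecidableEq V]

theorem support_perm (hM : G.IsMatchingFinset M) :
    hM.perm.support = M.biUnion Sym2.toFinset := by
  ext i
  rw [Equiv.Perm.mem_support, perm_apply, hM.matchingPartner_ne_self_iff]

theorem sign_perm (hM : G.IsMatchingFinset M) : Equiv.Perm.sign hM.perm = (-1) ^ #M := by
  have hsq : hM.perm ^ 2 = 1 := by
    ext i
    rw [sq, Equiv.Perm.mul_apply, perm_apply, perm_apply, hM.matchingPartner_involutive i,
      Equiv.Perm.one_apply]
  rw [Equiv.Perm.sign_of_pow_two_eq_one hsq, Equiv.Perm.card_fixedPoints,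
    Equiv.Perm.sum_cycleType, Nat.sub_sub_self (card_le_univ _), hM.support_perm,
    hM.card_biUnion_toFinset, Nat.mul_div_cancel_left _ two_pos]

theorem prod_perm_apply {R : Type*} [CommRing R] (hM : G.IsMatchingFinset M) (A : Matrix V V R)
    {s : R} (hdiag : ∀ i, A i i = 1) (hadj : ∀ i j, G.Adj i j → A i j * A j i = -s) :
    ∏ i, A (hM.perm i) i = (-s) ^ #M := by
  have hcovered : ∏ i, A (hM.perm i) i = ∏ i ∈ M.biUnion Sym2.toFinset, A (hM.perm i) i := by
    refine (prod_subset (subset_univ _) fun i _ hi => ?_).symm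
    rw [← hM.support_perm, Equiv.Perm.notMem_support] at hi
    rw [hi, hdiag]
  have hedge : ∀ e ∈ M, ∏ i ∈ e.toFinset, A (hM.perm i) i = -s := by
    intro e he
    induction e using Sym2.ind with
    | _ a b =>
      rw [Sym2.toFinset_mk_eq, prod_pair (hM.ne_of_mk_mem he), perm_apply, perm_apply,
        hM.matchingPartner_eq he, hM.matchingPartner_eq (Sym2.eq_swap ▸ he), mul_comm]
      exact hadj a b (hM.1 _ he)
  rw [hcovered, prod_biUnion hM.pairwiseDisjoint_toFinset, prod_congr rfl hedge, prod_const]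

end SimpleGraph.IsMatchingFinset

namespace Equiv.Perm

variable {σ : Perm V}

theorem mk_apply_eq_of_mem (hσ : Function.Involutive σ) {i v : V} (hv : v ∈ s(i, σ i)) :
    s(v, σ v) = s(i, σ i) := by
  rcases Sym2.mem_iff.mp hv with rfl | rfl
  · rfl
  · rw [hσ i, Sym2.eq_swap]

variable [DecidableEq V] [Fintype V]

def movedPairs (σ : Perm V) : Finset (Sym2 V) :=
  (univ.filter fun i => σ i ≠ i).image fun i => s(i, σ i)

theorem mem_movedPairs {e : Sym2 V} :
    e ∈ σ.movedPairs ↔ ∃ i, σ i ≠ i ∧ s(i, σ i) = e := by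
  simp [movedPairs]

theorem isMatchingFinset_movedPairs (hσ : Function.Involutive σ) (hG : G.IsAdjPerm σ) :
    G.IsMatchingFinset σ.movedPairs := by
  refine ⟨fun e he => ?_, fun e he f hf hef v hv => ?_⟩
  · obtain ⟨i, hi, rfl⟩ := mem_movedPairs.mp he
    exact (hG i).resolve_left hi
  · obtain ⟨i, -, rfl⟩ := mem_movedPairs.mp he
    obtain ⟨j, -, rfl⟩ := mem_movedPairs.mp hf
    exact hef ((mk_apply_eq_of_mem hσ hv.1).symm.trans (mk_apply_eq_of_mem hσ hv.2))

theorem movedPairs_perm (hM : G.IsMatchingFinset M) : hM.perm.movedPairs = M := by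
  ext e
  rw [mem_movedPairs]
  constructor
  · rintro ⟨i, hi, rfl⟩
    by_cases h : ∃ j, s(i, j) ∈ M
    · exact mk_matchingPartner_mem h
    · exact absurd (matchingPartner_eq_self h) hi
  · intro he
    induction e using Sym2.ind with
    | _ a b =>
      have hab : hM.perm a = b := hM.matchingPartner_eq he
      exact ⟨a, hab ▸ (hM.ne_of_mk_mem he).symm, hab ▸ rfl⟩

theorem perm_isMatchingFinset_movedPairs (hσ : Function.Involutive σ) (hG : G.IsAdjPerm σ) :
    (isMatchingFinset_movedPairs hσ hG).perm = σ := by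
  ext i
  rw [IsMatchingFinset.perm_apply]
  by_cases hi : σ i = i
  · rw [hi]
    refine matchingPartner_eq_self fun ⟨j, hj⟩ => ?_
    obtain ⟨k, hk, hkj⟩ := mem_movedPairs.mp hj
    have hdiag := mk_apply_eq_of_mem hσ (hkj ▸ Sym2.mem_mk_left i j)
    rw [hi] at hdiag
    -- `s(i, i) = s(k, σ k)` forces `σ k = k`
    exact hk ((Sym2.mk_isDiag_iff.mp (hdiag ▸ Sym2.mk_isDiag_iff.mpr rfl)).symm)
  · exact (isMatchingFinset_movedPairs hσ hG).matchingPartner_eq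
      (mem_movedPairs.mpr ⟨i, hi, rfl⟩)

end Equiv.Perm

variable [DecidableEq V] [Fintype V] {R : Type*} [CommRing R]

open Classical Equiv.Perm in
theorem Matrix.det_eq_sum_isAdjPerm (A : Matrix V V R)
    (hA : ∀ i j, i ≠ j → ¬G.Adj i j → A j i = 0) :
    A.det = ∑ σ ∈ univ.filter G.IsAdjPerm, sign σ • ∏ i, A (σ i) i := by
  rw [det_apply, sum_filter_of_ne]
  intro σ _ hσ i
  by_contra h
  push Not at h
  exact hσ (by rw [prod_eq_zero (f := fun j => A (σ j) j) (mem_univ i)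
    (hA i (σ i) (Ne.symm h.1) h.2), smul_zero])

open Classical Equiv.Perm in
theorem sum_sign_smul_prod_involutive_eq_sum_matchings (A : Matrix V V R) {s : R}
    (hdiag : ∀ i, A i i = 1) (hadj : ∀ i j, G.Adj i j → A i j * A j i = -s) :
    ∑ σ ∈ univ.filter (fun σ : Equiv.Perm V => G.IsAdjPerm σ ∧ Function.Involutive σ),
        sign σ • ∏ i, A (σ i) i =
      ∑ M ∈ univ.filter G.IsMatchingFinset, s ^ #M := by
  refine (sum_bij' (fun M hM => (mem_filter.mp hM).2.perm) (fun σ _ => σ.movedPairs)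
    (fun M hM => ?_) (fun σ hσ => ?_) (fun M hM => ?_) (fun σ hσ => ?_) (fun M hM => ?_)).symm
  · have hM := (mem_filter.mp hM).2
    exact mem_filter.mpr ⟨mem_univ _, hM.isAdjPerm_perm, hM.matchingPartner_involutive⟩
  · obtain ⟨hG, hinv⟩ := (mem_filter.mp hσ).2
    exact mem_filter.mpr ⟨mem_univ _, isMatchingFinset_movedPairs hinv hG⟩
  · exact movedPairs_perm _
  · obtain ⟨hG, hinv⟩ := (mem_filter.mp hσ).2
    exact perm_isMatchingFinset_movedPairs hinv hG
  · have hM := (mem_filter.mp hM).2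
    rw [hM.sign_perm, hM.prod_perm_apply A hdiag hadj, Units.smul_def, zsmul_eq_mul]
    push_cast
    rw [← mul_pow, neg_one_mul, neg_neg]

end Matchings

section Cycle

variable {n : ℕ} [NeZero n]

open Equiv

theorem cycGraph_adj_iff (hn : 2 ≤ n) {i j : Fin n} :
    (cycGraph n).Adj i j ↔ j = i + 1 ∨ i = j + 1 := by
  simp only [cycGraph, Fin.ext_iff, Fin.val_add_one_eq_ite, ne_eq]
  split_ifs <;> omega

theorem eq_finRotate_of_apply_eq_add_one (hn : 3 ≤ n) {σ : Perm (Fin n)}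
    (hσ : (cycGraph n).IsAdjPerm σ) {i : Fin n} (h₁ : σ i = i + 1) (h₂ : σ (i + 1) ≠ i) :
    σ = finRotate n := by
  have step : ∀ j, σ j = j + 1 → σ (j + 1) ≠ j → σ (j + 1) = j + 1 + 1 := by
    intro j hj hj'
    rcases hσ (j + 1) with h | h
    · exact absurd (σ.injective (h.trans hj.symm)) (Fin.add_one_ne_self (by omega) j)
    · rcases (cycGraph_adj_iff (by omega)).mp h with h | h
      · exact h
      · exact absurd (add_right_cancel h).symm hj'
  have key : ∀ j, σ j = j + 1 ∧ σ (j + 1) ≠ j :=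
    Fin.forall_of_add_one_closed ⟨h₁, h₂⟩ fun j ⟨hj, hj'⟩ =>
      ⟨step j hj hj', fun h =>
        Fin.add_one_add_one_ne_self hn j (σ.injective (h.trans hj.symm))⟩
  ext j
  rw [(key j).1, finRotate_apply]

theorem involutive_or_eq_finRotate (hn : 3 ≤ n) {σ : Perm (Fin n)}
    (hσ : (cycGraph n).IsAdjPerm σ) :
    Function.Involutive σ ∨ σ = finRotate n ∨ σ = (finRotate n)⁻¹ := by
  by_cases hinv : Function.Involutive σ
  · exact Or.inl hinv
  obtain ⟨i, hi⟩ : ∃ i, σ (σ i) ≠ i := by simpa [Function.Involutive] using hinv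
  right
  rcases hσ i with h | h
  · exact absurd (by rw [h, h]) hi
  rcases (cycGraph_adj_iff (by omega)).mp h with h | h
  · exact Or.inl (eq_finRotate_of_apply_eq_add_one hn hσ h (h ▸ hi))
  · refine Or.inr (inv_eq_iff_eq_inv.mp (eq_finRotate_of_apply_eq_add_one hn hσ.inv
      ((σ.symm_apply_apply i).trans h) fun h' => hi ?_))
    rw [← h] at h'
    rw [← h']
    exact σ.apply_symm_apply i

open Classical in
theorem filter_isAdjPerm_not_involutive_cycGraph (hn : 3 ≤ n) :
    univ.filter (fun σ : Perm (Fin n) => (cycGraph n).IsAdjPerm σ ∧ ¬Function.Involutive σ) =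
      {finRotate n, (finRotate n)⁻¹} := by
  have hrot : (cycGraph n).IsAdjPerm (finRotate n) := fun i =>
    Or.inr ((cycGraph_adj_iff (by omega)).mpr (Or.inl (finRotate_apply i)))
  have hrot_inv : ∀ i : Fin n, (finRotate n)⁻¹ (i + 1) = i := fun i =>
    Equiv.Perm.inv_eq_iff_eq.mpr (finRotate_apply i).symm
  ext σ
  simp only [mem_filter, mem_univ, true_and, mem_insert, mem_singleton]
  constructor
  · rintro ⟨hσ, hinv⟩
    exact (involutive_or_eq_finRotate hn hσ).resolve_left hinv
  · rintro (rfl | rfl)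
    · refine ⟨hrot, fun h => Fin.add_one_add_one_ne_self hn 0 ?_⟩
      simpa [finRotate_apply] using h 0
    · refine ⟨hrot.inv, fun h => Fin.add_one_add_one_ne_self hn 0 ?_⟩
      have := h (0 + 1 + 1)
      rw [hrot_inv, hrot_inv] at this
      exact this.symm

theorem finRotate_ne_inv (hn : 3 ≤ n) : finRotate n ≠ (finRotate n)⁻¹ := by
  intro h
  apply Fin.add_one_add_one_ne_self hn 0
  have := congrArg (fun σ : Equiv.Perm (Fin n) => σ (finRotate n 0)) h
  simpa [finRotate_apply] using this

end Cycle

section Tpm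

variable {n : ℕ}

theorem Tpm_apply_swap (hn : 2 ≤ n) (ε : ℝ) (i j : Fin n) : Tpm n ε j i = -Tpm n ε i j := by
  simp only [Tpm, of_apply]
  split_ifs <;> first | (exfalso; omega) | ring

theorem Tpm_apply_of_not_adj (hn : 2 ≤ n) (ε : ℝ) {i j : Fin n} (h : ¬(cycGraph n).Adj i j) :
    Tpm n ε i j = 0 := by
  simp only [cycGraph, Fin.ext_iff, ne_eq, not_and, not_or] at h
  simp only [Tpm, of_apply]
  split_ifs <;> first | rfl | (exfalso; omega)

theorem Tpm_apply_sq_of_adj {ε : ℝ} (hε : ε ^ 2 = 1) {i j : Fin n} (h : (cycGraph n).Adj i j) :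
    Tpm n ε i j ^ 2 = 1 := by
  obtain ⟨-, h⟩ := h
  simp only [Tpm, of_apply]
  split_ifs <;> first | (exfalso; omega) | linear_combination hε | norm_num

theorem Tpm_apply_add_one [NeZero n] (hn : 3 ≤ n) (ε : ℝ) (i : Fin n) :
    Tpm n ε i (i + 1) = if (i : ℕ) = n - 1 then -ε else 1 := by
  simp only [Tpm, of_apply, Fin.val_add_one_eq_ite]
  split_ifs <;> first | rfl | (exfalso; omega)

theorem prod_Tpm_apply_add_one [NeZero n] (hn : 3 ≤ n) (ε : ℝ) :
    ∏ i : Fin n, Tpm n ε i (i + 1) = -ε := by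
  have hlast : ∀ i : Fin n, (i : ℕ) = n - 1 ↔ i = ⟨n - 1, by omega⟩ := fun i => by
    rw [Fin.ext_iff]
  simp_rw [Tpm_apply_add_one hn, hlast, Finset.prod_ite_eq', Finset.mem_univ, if_true]

end Tpm

section Determinant

variable {n : ℕ} {ε : ℝ} (t : ℝ)

theorem one_add_smul_Tpm_apply_of_ne {i j : Fin n} (h : i ≠ j) :
    (1 + t • Tpm n ε) i j = t * Tpm n ε i j := by
  simp [one_apply_ne h]

theorem one_add_smul_Tpm_apply_self (hn : 2 ≤ n) (i : Fin n) : (1 + t • Tpm n ε) i i = 1 := by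
  simp [Tpm_apply_of_not_adj hn ε (cycGraph n).irrefl]

theorem one_add_smul_Tpm_mul_apply_of_adj (hn : 2 ≤ n) (hε : ε ^ 2 = 1) {i j : Fin n}
    (h : (cycGraph n).Adj i j) : (1 + t • Tpm n ε) i j * (1 + t • Tpm n ε) j i = -t ^ 2 := by
  rw [one_add_smul_Tpm_apply_of_ne t h.ne, one_add_smul_Tpm_apply_of_ne t h.ne.symm,
    Tpm_apply_swap hn ε i j]
  linear_combination (-t ^ 2) * Tpm_apply_sq_of_adj hε h

variable [NeZero n]

theorem sign_smul_prod_finRotate (hn : 3 ≤ n) :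
    Equiv.Perm.sign (finRotate n) • ∏ i, (1 + t • Tpm n ε) (finRotate n i) i =
      ε * t ^ n := by
  have hentry : ∀ i : Fin n,
      (1 + t • Tpm n ε) (finRotate n i) i = -(t * Tpm n ε i (i + 1)) := by
    intro i
    rw [finRotate_apply, one_add_smul_Tpm_apply_of_ne t (Fin.add_one_ne_self (by omega) i),
      Tpm_apply_swap (by omega), mul_neg]
  rw [prod_congr rfl fun i _ => hentry i, prod_neg, prod_mul_distrib, prod_const,
    prod_Tpm_apply_add_one hn, sign_finRotate, Units.smul_def, zsmul_eq_mul, card_univ,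
    Fintype.card_fin]
  obtain ⟨m, rfl⟩ : ∃ m, n = m + 1 := ⟨n - 1, by omega⟩
  have hpow : (-1 : ℝ) ^ m * (-1) ^ m = 1 := by rw [← mul_pow]; norm_num
  push_cast
  linear_combination (ε * t ^ (m + 1)) * hpow

theorem sign_smul_prod_finRotate_inv (hn : 3 ≤ n) :
    Equiv.Perm.sign (finRotate n)⁻¹ • ∏ i, (1 + t • Tpm n ε) ((finRotate n)⁻¹ i) i =
      (-1) ^ n * ε * t ^ n := by
  have hreindex : ∏ i, (1 + t • Tpm n ε) ((finRotate n)⁻¹ i) i =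
      ∏ i, t * Tpm n ε i (i + 1) := by
    refine (Fintype.prod_equiv (finRotate n) _ _ fun i => ?_).symm
    rw [← Equiv.Perm.mul_apply, inv_mul_cancel, Equiv.Perm.one_apply, finRotate_apply,
      one_add_smul_Tpm_apply_of_ne t (Fin.add_one_ne_self (by omega) i).symm]
  rw [hreindex, prod_mul_distrib, prod_const, prod_Tpm_apply_add_one hn, Equiv.Perm.sign_inv,
    sign_finRotate, Units.smul_def, zsmul_eq_mul, card_univ, Fintype.card_fin]
  obtain ⟨m, rfl⟩ : ∃ m, n = m + 1 := ⟨n - 1, by omega⟩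
  push_cast
  ring

end Determinant

open Classical in
theorem det_one_add_smul_Tpm {n : ℕ} (hn : 3 ≤ n) {ε : ℝ} (hε : ε ^ 2 = 1) (t : ℝ) :
    (1 + t • Tpm n ε).det =
      ∑ M ∈ univ.filter (cycGraph n).IsMatchingFinset, (t ^ 2) ^ #M +
        (1 + (-1) ^ n) * ε * t ^ n := by
  have : NeZero n := ⟨by omega⟩
  have hzero : ∀ i j, i ≠ j → ¬(cycGraph n).Adj i j → (1 + t • Tpm n ε) j i = 0 := by
    intro i j h hij
    rw [one_add_smul_Tpm_apply_of_ne t h.symm,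
      Tpm_apply_of_not_adj (by omega) ε fun h' => hij h'.symm, mul_zero]
  rw [det_eq_sum_isAdjPerm _ hzero, ← sum_filter_add_sum_filter_not _
      fun σ : Equiv.Perm (Fin n) => Function.Involutive σ,
    filter_filter, filter_filter, filter_isAdjPerm_not_involutive_cycGraph hn,
    sum_pair (finRotate_ne_inv hn), sign_smul_prod_finRotate t hn,
    sign_smul_prod_finRotate_inv t hn,
    sum_sign_smul_prod_involutive_eq_sum_matchings _ (one_add_smul_Tpm_apply_self t (by omega))
      fun i j h => one_add_smul_Tpm_mul_apply_of_adj t (by omega) hε h]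
  ring

open Classical in
theorem sum_pow_card_cycleMatchings (n : ℕ) (t : ℝ) :
    ∑ M ∈ univ.filter (cycGraph n).IsMatchingFinset, (t ^ 2) ^ #M =
      ∑ j ∈ range (n / 2 + 1), (numCycleMatchings n j : ℝ) * t ^ (2 * j) := by
  have hcard : ∀ M ∈ univ.filter (cycGraph n).IsMatchingFinset, #M ∈ range (n / 2 + 1) := by
    intro M hM
    have := (mem_filter.mp hM).2.two_mul_card_le
    rw [Fintype.card_fin] at this
    exact mem_range.mpr (by omega)
  rw [← sum_fiberwise_of_maps_to' hcard]
  refine sum_congr rfl fun j _ => ?_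
  rw [sum_const, nsmul_eq_mul, pow_mul, numCycleMatchings, Nat.card_eq_fintype_card,
    Fintype.card_subtype, filter_filter]
  rfl

/-- For `n ≥ 3` let `M(t) = ∑_{j=0}^{⌊n/2⌋} φ(j, C_n) t^{2j}` be the
matching polynomial of `C_n`.  Then for every real `t`: if `n` is odd,
`det(I + t T_{n,+}) = det(I + t T_{n,-}) = M(t)`; if `n` is even,
`det(I + t T_{n,+}) = M(t) + 2tⁿ` and `det(I + t T_{n,-}) = M(t) - 2tⁿ`. -/
theorem det_one_add_smul_T (n : ℕ) (hn : 3 ≤ n) (t : ℝ) :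
    (Odd n →
      ((1 : Matrix (Fin n) (Fin n) ℝ) + t • Tplus n).det =
          ∑ j ∈ Finset.range (n / 2 + 1), (numCycleMatchings n j : ℝ) * t ^ (2 * j) ∧
        ((1 : Matrix (Fin n) (Fin n) ℝ) + t • Tminus n).det =
          ∑ j ∈ Finset.range (n / 2 + 1), (numCycleMatchings n j : ℝ) * t ^ (2 * j)) ∧
    (Even n →
      ((1 : Matrix (Fin n) (Fin n) ℝ) + t • Tplus n).det =
          (∑ j ∈ Finset.range (n / 2 + 1), (numCycleMatchings n j : ℝ) * t ^ (2 * j)) +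
            2 * t ^ n ∧
        ((1 : Matrix (Fin n) (Fin n) ℝ) + t • Tminus n).det =
          (∑ j ∈ Finset.range (n / 2 + 1), (numCycleMatchings n j : ℝ) * t ^ (2 * j)) -
            2 * t ^ n) := by
  have hplus := det_one_add_smul_Tpm hn (ε := 1) (by norm_num) t
  have hminus := det_one_add_smul_Tpm hn (ε := -1) (by norm_num) t
  rw [sum_pow_card_cycleMatchings] at hplus hminus
  refine ⟨fun hodd => ?_, fun heven => ?_⟩
  · rw [hodd.neg_one_pow] at hplus hminus
    exact ⟨by rw [Tplus, hplus]; ring, by rw [Tminus, hminus]; ring⟩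
  · rw [heven.neg_one_pow] at hplus hminus
    exact ⟨by rw [Tplus, hplus]; ring, by rw [Tminus, hminus]; ring⟩
end
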